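/- Let d ≥ 1 and let (s(x))_{x∈ℤ^d} be i.i.d. real random variables with E[max(−s(0),0)] < ∞ and E[max(s(0),0)] = +∞ (so that E[s(0)] = +∞). Then almost surely s does not stabilize, i.e. with probability one there exists no f : ℤ^d → [0,∞) with s(x) + Δf(x) ≤ 1 for every x ∈ ℤ^d. -/

import Mathlib

open MeasureTheory ProbabilityTheory Filter
open scoped BigOperators Topology ENNReal

noncomputable section

/-- The graph Laplacian on `ℤ^d`: `Δf(x) = (2d)⁻¹ ∑_{‖e‖₁=1} f(x+e) − f(x)`. -/
def latLap (d : ℕ) (f : (Fin d → ℤ) → ℝ) (x : Fin d → ℤ) : ℝ :=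
  (2 * (d : ℝ))⁻¹ * (∑ i : Fin d, (f (x + Pi.single i 1) + f (x - Pi.single i 1))) - f x

/-- A divisible sandpile configuration `s : ℤ^d → ℝ` stabilizes iff there is a nonnegative
`u : ℤ^d → [0,∞)` with `s + Δu ≤ 1` everywhere. -/
def Stabilizes (d : ℕ) (s : (Fin d → ℤ) → ℝ) : Prop :=
  ∃ u : (Fin d → ℤ) → ℝ, (∀ x, 0 ≤ u x) ∧ ∀ x, s x + latLap d u x ≤ 1

/-!
If `u ≥ 0` is an odometer for `s`, then `s ≤ 1 - Δu`. Pair this with the occupation measure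
`W_k = ∑_{j<k} ν Pʲ` of simple random walk started from the uniform distribution `ν` on `N`
sites: `⟨ν Pʲ, Δu⟩ = ⟨ν Pʲ⁺¹, u⟩ - ⟨ν Pʲ, u⟩` telescopes and `u ≥ 0`, so `⟨W_k, s⟩ ≤ k + ⟨ν, u⟩`
for every `k`. On the other hand `W_k` has mass `k` and no atom heavier than `k / N`, so for the
i.i.d. field `s` the sum `⟨W_k, s⟩` concentrates: Chebyshev applies to `s` clamped to `[-M, M]`,
whose mean exceeds `4` for large `M` because `E[s(0)] = ∞`, and Markov to the part of `s` below
`-M`. Hence `P(⟨W_k, s⟩ ≤ 2k) ≤ M² / N + E[(-M - s(0))⁺]`, which is as small as we like.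

Measures are finitely supported `μ : (Fin d → ℤ) →₀ ℝ`, the pairing `⟨μ, f⟩` is
`linearCombination ℝ f μ`, and `transition d` is `μ ↦ μ P`.
-/

namespace Sandpile

open Finsupp

section Pairing

variable {α : Type*}

lemma linearCombination_mono {μ : α →₀ ℝ} (hμ : 0 ≤ μ) {f g : α → ℝ} (hfg : f ≤ g) :
    linearCombination ℝ f μ ≤ linearCombination ℝ g μ := by
  simp only [linearCombination_apply, smul_eq_mul]
  exact Finsupp.sum_le_sum fun x _ => mul_le_mul_of_nonneg_left (hfg x) (hμ x)

lemma linearCombination_nonneg {μ : α →₀ ℝ} (hμ : 0 ≤ μ) {f : α → ℝ} (hf : 0 ≤ f) :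
    0 ≤ linearCombination ℝ f μ := by
  simpa using linearCombination_mono hμ hf

lemma linearCombination_add_sub (μ : α →₀ ℝ) (f g h : α → ℝ) :
    linearCombination ℝ (f + g - h) μ =
      linearCombination ℝ f μ + linearCombination ℝ g μ - linearCombination ℝ h μ := by
  simp only [linearCombination_apply, Pi.add_apply, Pi.sub_apply, smul_add, smul_sub,
    Finsupp.sum_add, Finsupp.sum_sub]

lemma linearCombination_eq_sum (μ : α →₀ ℝ) (f : α → ℝ) :
    linearCombination ℝ f μ = ∑ x ∈ μ.support, μ x * f x := by
  simp [linearCombination_apply, Finsupp.sum]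

def uniformOn (S : Finset α) : α →₀ ℝ := (S.card : ℝ)⁻¹ • ∑ x ∈ S, single x 1

lemma uniformOn_apply [DecidableEq α] (S : Finset α) (y : α) :
    uniformOn S y = if y ∈ S then (S.card : ℝ)⁻¹ else 0 := by
  simp [uniformOn, single_apply]

lemma uniformOn_nonneg (S : Finset α) : 0 ≤ uniformOn S := fun y => by
  classical
  rw [uniformOn_apply]
  split_ifs <;> positivity

lemma uniformOn_le (S : Finset α) (y : α) : uniformOn S y ≤ (S.card : ℝ)⁻¹ := by
  classical
  rw [uniformOn_apply]
  split_ifs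
  exacts [le_rfl, by positivity]

lemma linearCombination_one_uniformOn {S : Finset α} (hS : S.Nonempty) :
    linearCombination ℝ (1 : α → ℝ) (uniformOn S) = 1 := by
  simp [uniformOn, map_sum, hS.ne_empty]

end Pairing

variable {d : ℕ}

lemma inv_two_mul_sum_add_self (hd : d ≠ 0) (c : ℝ) :
    (2 * (d : ℝ))⁻¹ * ∑ _i : Fin d, (c + c) = c := by
  rw [Finset.sum_const, Finset.card_univ, Fintype.card_fin, nsmul_eq_mul]
  field_simp
  ring

def stepLaw (d : ℕ) (x : Fin d → ℤ) : (Fin d → ℤ) →₀ ℝ :=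
  (2 * (d : ℝ))⁻¹ • ∑ i, (single (x + Pi.single i 1) 1 + single (x - Pi.single i 1) 1)

lemma linearCombination_stepLaw (f : (Fin d → ℤ) → ℝ) (x : Fin d → ℤ) :
    linearCombination ℝ f (stepLaw d x) =
      (2 * (d : ℝ))⁻¹ * ∑ i, (f (x + Pi.single i 1) + f (x - Pi.single i 1)) := by
  simp [stepLaw, map_sum]

lemma latLap_eq (f : (Fin d → ℤ) → ℝ) (x : Fin d → ℤ) :
    latLap d f x = linearCombination ℝ f (stepLaw d x) - f x := by
  rw [latLap, linearCombination_stepLaw]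

lemma linearCombination_one_stepLaw (hd : d ≠ 0) (x : Fin d → ℤ) :
    linearCombination ℝ (1 : (Fin d → ℤ) → ℝ) (stepLaw d x) = 1 := by
  rw [linearCombination_stepLaw]
  exact inv_two_mul_sum_add_self hd 1

def transition (d : ℕ) : ((Fin d → ℤ) →₀ ℝ) →ₗ[ℝ] ((Fin d → ℤ) →₀ ℝ) :=
  linearCombination ℝ (stepLaw d)

lemma linearCombination_transition (f : (Fin d → ℤ) → ℝ) (μ : (Fin d → ℤ) →₀ ℝ) :
    linearCombination ℝ f (transition d μ) =
      linearCombination ℝ (fun x => linearCombination ℝ f (stepLaw d x)) μ :=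
  linearCombination_linearCombination ℝ f (stepLaw d) μ

lemma transition_apply (μ : (Fin d → ℤ) →₀ ℝ) (y : Fin d → ℤ) :
    transition d μ y =
      (2 * (d : ℝ))⁻¹ * ∑ i, (μ (y - Pi.single i 1) + μ (y + Pi.single i 1)) := by
  classical
  simp only [transition, stepLaw, linearCombination_apply, Finsupp.sum_apply, Finsupp.smul_apply,
    finsetSum_apply, Finsupp.add_apply, single_apply, ← eq_sub_iff_add_eq, sub_eq_iff_eq_add,
    smul_eq_mul, Finset.mul_sum, mul_add, mul_ite, mul_one, mul_zero]
  rw [Finsupp.sum, Finset.sum_comm]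
  simp only [Finset.sum_add_distrib, Finset.sum_ite_eq', Finsupp.mem_support_iff, ne_eq, ite_not]
  congr 1 <;> refine Finset.sum_congr rfl fun i _ => ?_ <;> split_ifs with h <;> simp [h, mul_comm]

lemma transition_nonneg {μ : (Fin d → ℤ) →₀ ℝ} (hμ : 0 ≤ μ) : 0 ≤ transition d μ := fun y => by
  rw [transition_apply]
  exact mul_nonneg (by positivity) (Finset.sum_nonneg fun i _ => add_nonneg (hμ _) (hμ _))

lemma transition_le (hd : d ≠ 0) {μ : (Fin d → ℤ) →₀ ℝ} {c : ℝ} (hμ : ∀ y, μ y ≤ c)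
    (y : Fin d → ℤ) : transition d μ y ≤ c := by
  calc transition d μ y ≤ (2 * (d : ℝ))⁻¹ * ∑ _i : Fin d, (c + c) := by
        rw [transition_apply]
        gcongr <;> apply hμ
    _ = c := inv_two_mul_sum_add_self hd c

lemma linearCombination_one_transition (hd : d ≠ 0) (μ : (Fin d → ℤ) →₀ ℝ) :
    linearCombination ℝ (1 : (Fin d → ℤ) → ℝ) (transition d μ) = linearCombination ℝ 1 μ := by
  rw [linearCombination_transition]
  simp_rw [linearCombination_one_stepLaw hd]
  rfl

lemma linearCombination_transition_le {s u : (Fin d → ℤ) → ℝ}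
    (hsu : ∀ x, s x + latLap d u x ≤ 1) {μ : (Fin d → ℤ) →₀ ℝ} (hμ : 0 ≤ μ) :
    linearCombination ℝ u (transition d μ) ≤
      linearCombination ℝ u μ + linearCombination ℝ 1 μ - linearCombination ℝ s μ := by
  rw [linearCombination_transition, ← linearCombination_add_sub]
  refine linearCombination_mono hμ fun x => ?_
  have := hsu x
  rw [latLap_eq] at this
  simp only [Pi.add_apply, Pi.sub_apply, Pi.one_apply]
  linarith

lemma transition_iterate_nonneg {ν : (Fin d → ℤ) →₀ ℝ} (hν : 0 ≤ ν) (j : ℕ) :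
    0 ≤ (transition d)^[j] ν :=
  Function.Iterate.rec (0 ≤ ·) hν (fun _ => transition_nonneg) j

lemma transition_iterate_le (hd : d ≠ 0) {ν : (Fin d → ℤ) →₀ ℝ} {c : ℝ} (hν : ∀ y, ν y ≤ c)
    (j : ℕ) : ∀ y, (transition d)^[j] ν y ≤ c :=
  Function.Iterate.rec (fun μ : (Fin d → ℤ) →₀ ℝ => ∀ y, μ y ≤ c) hν
    (fun _ => transition_le hd) j

lemma linearCombination_one_transition_iterate (hd : d ≠ 0) {ν : (Fin d → ℤ) →₀ ℝ}
    (hν : linearCombination ℝ (1 : (Fin d → ℤ) → ℝ) ν = 1) (j : ℕ) :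
    linearCombination ℝ (1 : (Fin d → ℤ) → ℝ) ((transition d)^[j] ν) = 1 :=
  Function.Iterate.rec (fun μ => linearCombination ℝ (1 : (Fin d → ℤ) → ℝ) μ = 1) hν
    (fun μ h => (linearCombination_one_transition hd μ).trans h) j

def occupation (d : ℕ) (ν : (Fin d → ℤ) →₀ ℝ) (k : ℕ) : (Fin d → ℤ) →₀ ℝ :=
  ∑ j ∈ Finset.range k, (transition d)^[j] ν

lemma occupation_nonneg {ν : (Fin d → ℤ) →₀ ℝ} (hν : 0 ≤ ν) (k : ℕ) : 0 ≤ occupation d ν k :=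
  Finset.sum_nonneg fun j _ => transition_iterate_nonneg hν j

lemma occupation_le (hd : d ≠ 0) {ν : (Fin d → ℤ) →₀ ℝ} {c : ℝ} (hν : ∀ y, ν y ≤ c) (k : ℕ)
    (y : Fin d → ℤ) : occupation d ν k y ≤ k * c := by
  rw [occupation, finsetSum_apply]
  calc ∑ j ∈ Finset.range k, (transition d)^[j] ν y ≤ ∑ _j ∈ Finset.range k, c :=
        Finset.sum_le_sum fun j _ => transition_iterate_le hd hν j y
    _ = k * c := by simp

lemma linearCombination_one_occupation (hd : d ≠ 0) {ν : (Fin d → ℤ) →₀ ℝ}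
    (hν : linearCombination ℝ (1 : (Fin d → ℤ) → ℝ) ν = 1) (k : ℕ) :
    linearCombination ℝ (1 : (Fin d → ℤ) → ℝ) (occupation d ν k) = k := by
  simp [occupation, map_sum, linearCombination_one_transition_iterate hd hν]

lemma Stabilizes.exists_linearCombination_occupation_le (hd : d ≠ 0)
    {s : (Fin d → ℤ) → ℝ} (hs : Stabilizes d s) {ν : (Fin d → ℤ) →₀ ℝ} (hν : 0 ≤ ν)
    (hν1 : linearCombination ℝ (1 : (Fin d → ℤ) → ℝ) ν = 1) :
    ∃ C, ∀ k : ℕ, linearCombination ℝ s (occupation d ν k) ≤ k + C := by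
  obtain ⟨u, hu, hsu⟩ := hs
  refine ⟨linearCombination ℝ u ν, fun k => ?_⟩
  have htelescope : ∀ k : ℕ, linearCombination ℝ u ((transition d)^[k] ν) +
      linearCombination ℝ s (occupation d ν k) ≤ k + linearCombination ℝ u ν := by
    intro k
    induction k with
    | zero => simp [occupation]
    | succ k ih =>
      have hstep := linearCombination_transition_le hsu (transition_iterate_nonneg hν k)
      rw [linearCombination_one_transition_iterate hd hν1] at hstep
      rw [Function.iterate_succ_apply', occupation, Finset.sum_range_succ, map_add,
        ← occupation]
      push_cast
      linarith
  linarith [htelescope k,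
    linearCombination_nonneg (transition_iterate_nonneg hν k) (show 0 ≤ u from hu)]

section Truncation

def clamp (M t : ℝ) : ℝ := max (-M) (min t M)

def belowClamp (M t : ℝ) : ℝ := max (-M - t) 0

lemma measurable_clamp (M : ℝ) : Measurable (clamp M) := by
  unfold clamp
  fun_prop

lemma measurable_belowClamp (M : ℝ) : Measurable (belowClamp M) := by
  unfold belowClamp
  fun_prop

lemma abs_clamp_le {M : ℝ} (hM : 0 ≤ M) (t : ℝ) : |clamp M t| ≤ M := by
  rw [abs_le, clamp]
  exact ⟨le_max_left _ _, max_le (by linarith) (min_le_right _ _)⟩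

lemma belowClamp_nonneg (M t : ℝ) : 0 ≤ belowClamp M t := le_max_right _ _

lemma clamp_sub_belowClamp_le (M t : ℝ) : clamp M t - belowClamp M t ≤ t := by
  have := min_le_left t M
  unfold clamp belowClamp
  rcases le_total t (-M) with h | h <;> simp only [max_def] <;> split_ifs <;> linarith

lemma min_posPart_sub_negPart_le_clamp {M : ℝ} (hM : 0 ≤ M) (t : ℝ) :
    min (max t 0) M - max (-t) 0 ≤ clamp M t := by
  unfold clamp
  rcases le_total t 0 with h | h <;> simp only [max_def, min_def] <;> split_ifs <;> linarith

end Truncation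

section Probability

variable {Ω ι : Type*} [MeasurableSpace Ω] {P : Measure Ω}

lemma meas_mass_le_weightedSum_le {t : Finset ι} {w : ι → ℝ} {Z : ι → Ω → ℝ} {ζ : ℝ≥0∞}
    (hZ : ∀ i ∈ t, AEMeasurable (Z i) P) (hZ0 : ∀ i ∈ t, ∀ ω, 0 ≤ Z i ω)
    (hζ : ∀ i ∈ t, ∫⁻ ω, ENNReal.ofReal (Z i ω) ∂P ≤ ζ)
    (hw : ∀ i ∈ t, 0 ≤ w i) (hm : 0 < ∑ i ∈ t, w i) :
    P {ω | ∑ i ∈ t, w i ≤ ∑ i ∈ t, w i * Z i ω} ≤ ζ := by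
  set m := ∑ i ∈ t, w i
  have hint : ∫⁻ ω, ENNReal.ofReal (∑ i ∈ t, w i * Z i ω) ∂P ≤ ENNReal.ofReal m * ζ := by
    calc ∫⁻ ω, ENNReal.ofReal (∑ i ∈ t, w i * Z i ω) ∂P
        = ∫⁻ ω, ∑ i ∈ t, ENNReal.ofReal (w i) * ENNReal.ofReal (Z i ω) ∂P := by
          refine lintegral_congr fun ω => ?_
          rw [ENNReal.ofReal_sum_of_nonneg fun i hi => mul_nonneg (hw i hi) (hZ0 i hi ω)]
          exact Finset.sum_congr rfl fun i hi => ENNReal.ofReal_mul (hw i hi)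
      _ = ∑ i ∈ t, ENNReal.ofReal (w i) * ∫⁻ ω, ENNReal.ofReal (Z i ω) ∂P := by
          rw [lintegral_finsetSum' t fun i hi => (hZ i hi).ennreal_ofReal.const_mul _]
          simp_rw [lintegral_const_mul' _ _ ENNReal.ofReal_ne_top]
      _ ≤ ∑ i ∈ t, ENNReal.ofReal (w i) * ζ := by gcongr with i hi; exact hζ i hi
      _ = ENNReal.ofReal m * ζ := by rw [← Finset.sum_mul, ENNReal.ofReal_sum_of_nonneg hw]
  calc _ ≤ P {ω | ENNReal.ofReal m ≤ ENNReal.ofReal (∑ i ∈ t, w i * Z i ω)} :=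
        measure_mono fun ω hω => ENNReal.ofReal_le_ofReal hω
    _ ≤ (∫⁻ ω, ENNReal.ofReal (∑ i ∈ t, w i * Z i ω) ∂P) / ENNReal.ofReal m :=
        meas_ge_le_lintegral_div
          (Finset.aemeasurable_fun_sum t fun i hi => (hZ i hi).const_mul (w i)).ennreal_ofReal
          (by simpa using hm) ENNReal.ofReal_ne_top
    _ ≤ ζ := ENNReal.div_le_of_le_mul' hint

lemma tendsto_lintegral_belowClamp {X : Ω → ℝ} (hX : AEMeasurable X P)
    (hneg : ∫⁻ ω, ENNReal.ofReal (max (-X ω) 0) ∂P < ⊤) :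
    Tendsto (fun n : ℕ => ∫⁻ ω, ENNReal.ofReal (belowClamp n (X ω)) ∂P) atTop (𝓝 0) := by
  have hlim : ∀ ω, ∀ᶠ n : ℕ in atTop, ENNReal.ofReal (belowClamp n (X ω)) = 0 := fun ω =>
    (eventually_ge_atTop ⌈-X ω⌉₊).mono fun n hn => by
      have : -X ω ≤ n := (Nat.le_ceil _).trans (Nat.cast_le.2 hn)
      rw [belowClamp, max_eq_right (by linarith), ENNReal.ofReal_zero]
  simpa using tendsto_lintegral_of_dominated_convergence'
    (F := fun n ω => ENNReal.ofReal (belowClamp n (X ω))) (f := 0) _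
    (fun n => ((measurable_belowClamp n).comp_aemeasurable hX).ennreal_ofReal)
    (fun n => ae_of_all _ fun ω => ENNReal.ofReal_le_ofReal
      (max_le_max (by linarith [n.cast_nonneg (α := ℝ)]) le_rfl)) hneg.ne
    (ae_of_all _ fun ω => tendsto_const_nhds.congr' ((hlim ω).mono fun _ h => h.symm))

section FiniteMeasure

variable [IsFiniteMeasure P]

lemma tendsto_integral_min_atTop {f : Ω → ℝ} (hf : AEMeasurable f P) (hf0 : ∀ ω, 0 ≤ f ω)
    (htop : ∫⁻ ω, ENNReal.ofReal (f ω) ∂P = ⊤) :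
    Tendsto (fun n : ℕ => ∫ ω, min (f ω) n ∂P) atTop atTop := by
  have hmin : ∀ n : ℕ, AEMeasurable (fun ω => min (f ω) n) P := fun n => hf.min aemeasurable_const
  have hlim : Tendsto (fun n : ℕ => ∫⁻ ω, ENNReal.ofReal (min (f ω) n) ∂P) atTop (𝓝 ⊤) := by
    rw [← htop]
    refine lintegral_tendsto_of_tendsto_of_monotone (fun n => (hmin n).ennreal_ofReal)
      (ae_of_all _ fun ω m n hmn => ?_) (ae_of_all _ fun ω => ?_)
    · exact ENNReal.ofReal_le_ofReal (min_le_min le_rfl (by exact_mod_cast hmn))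
    · refine tendsto_const_nhds.congr' ?_
      filter_upwards [eventually_ge_atTop ⌈f ω⌉₊] with n hn
      rw [min_eq_left ((Nat.le_ceil _).trans (by exact_mod_cast hn))]
  have hfin : ∀ n : ℕ, ∫⁻ ω, ENNReal.ofReal (min (f ω) n) ∂P ≠ ⊤ := fun n =>
    ne_top_of_le_ne_top (by simp [ENNReal.mul_eq_top] : ∫⁻ _, ENNReal.ofReal n ∂P ≠ ⊤)
      (lintegral_mono fun ω => ENNReal.ofReal_le_ofReal (min_le_right _ _))
  refine tendsto_atTop.2 fun C => ?_
  filter_upwards [hlim.eventually (lt_mem_nhds (ENNReal.ofReal_lt_top (r := C)))] with n hn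
  rw [integral_eq_lintegral_of_nonneg_ae (ae_of_all _ fun ω => le_min (hf0 ω) n.cast_nonneg)
    (hmin n).aestronglyMeasurable]
  exact (ENNReal.ofReal_le_iff_le_toReal (hfin n)).1 hn.le

lemma tendsto_integral_clamp {X : Ω → ℝ} (hX : AEMeasurable X P)
    (hneg : ∫⁻ ω, ENNReal.ofReal (max (-X ω) 0) ∂P < ⊤)
    (hpos : ∫⁻ ω, ENNReal.ofReal (max (X ω) 0) ∂P = ⊤) :
    Tendsto (fun n : ℕ => ∫ ω, clamp n (X ω) ∂P) atTop atTop := by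
  have hXneg : Integrable (fun ω => max (-X ω) 0) P :=
    (lintegral_ofReal_ne_top_iff_integrable (hX.neg.max aemeasurable_const).aestronglyMeasurable
      (ae_of_all _ fun ω => le_max_right _ _)).1 hneg.ne
  have hle : ∀ n : ℕ, ∫ ω, min (max (X ω) 0) n ∂P - ∫ ω, max (-X ω) 0 ∂P ≤
      ∫ ω, clamp n (X ω) ∂P := by
    intro n
    have hmin : Integrable (fun ω => min (max (X ω) 0) n) P :=
      .of_bound ((hX.max aemeasurable_const).min aemeasurable_const).aestronglyMeasurable n
        (ae_of_all _ fun ω => by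
          rw [Real.norm_of_nonneg (le_min (le_max_right _ _) n.cast_nonneg)]
          exact min_le_right _ _)
    have hclamp : Integrable (fun ω => clamp n (X ω)) P :=
      .of_bound ((measurable_clamp n).comp_aemeasurable hX).aestronglyMeasurable n
        (ae_of_all _ fun ω => abs_clamp_le n.cast_nonneg _)
    rw [← integral_sub hmin hXneg]
    exact integral_mono (hmin.sub hXneg) hclamp fun ω =>
      min_posPart_sub_negPart_le_clamp n.cast_nonneg (X ω)
  refine tendsto_atTop_mono hle ?_
  simp_rw [sub_eq_add_neg]
  exact tendsto_atTop_add_const_right _ _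
    (tendsto_integral_min_atTop (hX.max aemeasurable_const) (fun ω => le_max_right _ _) hpos)

end FiniteMeasure

variable [IsProbabilityMeasure P]

lemma meas_mass_le_abs_weightedSum_sub_le {t : Finset ι} {w : ι → ℝ} {Y : ι → Ω → ℝ}
    {M η : ℝ} (hY : ∀ i ∈ t, AEMeasurable (Y i) P) (hYM : ∀ i ∈ t, ∀ ω, |Y i ω| ≤ M)
    (hindep : Set.Pairwise t fun i j => IndepFun (Y i) (Y j) P)
    (hw : ∀ i ∈ t, 0 ≤ w i) (hwη : ∀ i ∈ t, w i ≤ η * ∑ j ∈ t, w j) (hm : 0 < ∑ i ∈ t, w i) :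
    P {ω | ∑ i ∈ t, w i ≤ |∑ i ∈ t, w i * Y i ω - ∑ i ∈ t, w i * ∫ ω', Y i ω' ∂P|} ≤
      ENNReal.ofReal (η * M ^ 2) := by
  set m := ∑ i ∈ t, w i
  have hmemLp : ∀ i ∈ t, MemLp (fun ω => w i * Y i ω) 2 P := fun i hi =>
    (MemLp.of_bound (hY i hi).aestronglyMeasurable M (ae_of_all _ (hYM i hi))).const_mul (w i)
  have hmean : ∫ ω, ∑ i ∈ t, w i * Y i ω ∂P = ∑ i ∈ t, w i * ∫ ω, Y i ω ∂P := by
    rw [integral_finsetSum t fun i hi => (hmemLp i hi).integrable one_le_two]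
    simp_rw [integral_const_mul]
  have hvar : variance (fun ω => ∑ i ∈ t, w i * Y i ω) P ≤ η * M ^ 2 * m ^ 2 := by
    calc variance (fun ω => ∑ i ∈ t, w i * Y i ω) P
        = ∑ i ∈ t, w i ^ 2 * variance (Y i) P := by
          rw [← Finset.sum_fn, IndepFun.variance_sum hmemLp]
          · simp_rw [variance_const_mul]
          · exact fun i hi j hj hij =>
              (hindep hi hj hij).comp (measurable_const_mul _) (measurable_const_mul _)
      _ ≤ ∑ i ∈ t, w i * (η * m) * M ^ 2 := by
          refine Finset.sum_le_sum fun i hi => ?_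
          have hVar : variance (Y i) P ≤ M ^ 2 := by
            have := variance_le_sq_of_bounded (a := -M) (b := M)
              (ae_of_all _ fun ω => abs_le.mp (hYM i hi ω)) (hY i hi)
            linarith
          rw [sq (w i), mul_assoc, mul_assoc]
          exact mul_le_mul_of_nonneg_left (mul_le_mul (hwη i hi) hVar (variance_nonneg _ _)
            ((hw i hi).trans (hwη i hi))) (hw i hi)
      _ = η * M ^ 2 * m ^ 2 := by rw [← Finset.sum_mul, ← Finset.sum_mul]; ring
  calc _ ≤ ENNReal.ofReal (variance (fun ω => ∑ i ∈ t, w i * Y i ω) P / m ^ 2) := by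
        rw [← hmean]
        exact meas_ge_le_variance_div_sq (memLp_finsetSum t hmemLp) hm
    _ ≤ ENNReal.ofReal (η * M ^ 2) := by
        gcongr
        rw [div_le_iff₀ (by positivity)]
        exact hvar

lemma meas_weightedSum_le_two_mul_mass_le {t : Finset ι} {w : ι → ℝ} {X : ι → Ω → ℝ}
    {X₀ : Ω → ℝ} {M η : ℝ} (hM : 0 ≤ M)
    (hindep : Set.Pairwise t fun i j => IndepFun (X i) (X j) P)
    (hident : ∀ i ∈ t, IdentDistrib (X i) X₀ P P) (hmean : 4 ≤ ∫ ω, clamp M (X₀ ω) ∂P)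
    (hw : ∀ i ∈ t, 0 ≤ w i) (hwη : ∀ i ∈ t, w i ≤ η * ∑ j ∈ t, w j) (hm : 0 < ∑ i ∈ t, w i) :
    P {ω | ∑ i ∈ t, w i * X i ω ≤ 2 * ∑ i ∈ t, w i} ≤
      ENNReal.ofReal (η * M ^ 2) + ∫⁻ ω, ENNReal.ofReal (belowClamp M (X₀ ω)) ∂P := by
  set m := ∑ i ∈ t, w i
  have hchebyshev := meas_mass_le_abs_weightedSum_sub_le (Y := fun i ω => clamp M (X i ω))
    (fun i hi => (measurable_clamp M).comp_aemeasurable (hident i hi).aemeasurable_fst)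
    (fun _ _ _ => abs_clamp_le hM _)
    (fun i hi j hj hij => (hindep hi hj hij).comp (measurable_clamp M) (measurable_clamp M))
    hw hwη hm
  have hmarkov := meas_mass_le_weightedSum_le (Z := fun i ω => belowClamp M (X i ω))
    (fun i hi => (measurable_belowClamp M).comp_aemeasurable (hident i hi).aemeasurable_fst)
    (fun _ _ _ => belowClamp_nonneg _ _)
    (fun i hi => ((hident i hi).comp
      (ENNReal.measurable_ofReal.comp (measurable_belowClamp M))).lintegral_eq.le) hw hm
  have hmeanY : ∑ i ∈ t, w i * ∫ ω, clamp M (X i ω) ∂P = m * ∫ ω, clamp M (X₀ ω) ∂P := by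
    rw [Finset.sum_mul]
    exact Finset.sum_congr rfl fun i hi =>
      congrArg (w i * ·) ((hident i hi).comp (measurable_clamp M)).integral_eq
  refine (measure_mono fun ω hω => ?_).trans
    ((measure_union_le _ _).trans (add_le_add hchebyshev hmarkov))
  -- off both exceptional events, `∑ w X ≥ (4m - m) - m > 2m`
  by_contra hcon
  simp only [Set.mem_union, Set.mem_ofPred_eq, not_or, not_le, hmeanY] at hω hcon
  have hsplit : ∑ i ∈ t, w i * clamp M (X i ω) - ∑ i ∈ t, w i * belowClamp M (X i ω) ≤
      ∑ i ∈ t, w i * X i ω := by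
    rw [← Finset.sum_sub_distrib]
    exact Finset.sum_le_sum fun i hi => by
      rw [← mul_sub]
      exact mul_le_mul_of_nonneg_left (clamp_sub_belowClamp_le _ _) (hw i hi)
  nlinarith [(abs_lt.1 hcon.1).1]

end Probability

variable {Ω : Type*} [MeasurableSpace Ω] {P : Measure Ω} [IsProbabilityMeasure P]

lemma measure_stabilizes_le (hd : d ≠ 0) {s : (Fin d → ℤ) → Ω → ℝ} {X₀ : Ω → ℝ}
    (hindep : Pairwise fun x y => IndepFun (s x) (s y) P)
    (hident : ∀ x, IdentDistrib (s x) X₀ P P) {M : ℝ} (hM : 0 ≤ M)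
    (hmean : 4 ≤ ∫ ω, clamp M (X₀ ω) ∂P) {S : Finset (Fin d → ℤ)} (hS : S.Nonempty) :
    P {ω | Stabilizes d fun x => s x ω} ≤
      ENNReal.ofReal (M ^ 2 / S.card) + ∫⁻ ω, ENNReal.ofReal (belowClamp M (X₀ ω)) ∂P := by
  set W := occupation d (uniformOn S)
  have hW0 : ∀ k, 0 ≤ W k := occupation_nonneg (uniformOn_nonneg S)
  have hWmass : ∀ k, ∑ x ∈ (W k).support, W k x = k := fun k => by
    simpa [linearCombination_eq_sum] using
      linearCombination_one_occupation hd (linearCombination_one_uniformOn hS) k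
  have hlevel : ∀ k : ℕ, 0 < k →
      P {ω | linearCombination ℝ (fun x => s x ω) (W k) ≤ 2 * k} ≤
        ENNReal.ofReal (M ^ 2 / S.card) + ∫⁻ ω, ENNReal.ofReal (belowClamp M (X₀ ω)) ∂P := by
    intro k hk
    have := meas_weightedSum_le_two_mul_mass_le (t := (W k).support) (η := (S.card : ℝ)⁻¹) hM
      (fun x _ y _ hxy => hindep hxy) (fun x _ => hident x) hmean (fun x _ => hW0 k x)
      (fun x _ => by rw [hWmass, mul_comm]; exact occupation_le hd (uniformOn_le S) k x)
      (by rw [hWmass]; exact_mod_cast hk)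
    simpa [linearCombination_eq_sum, hWmass, inv_mul_eq_div] using this
  set G : ℕ → Set Ω := fun C =>
    {ω | ∀ k : ℕ, linearCombination ℝ (fun x => s x ω) (W k) ≤ k + C}
  have hstab : {ω | Stabilizes d fun x => s x ω} ⊆ ⋃ C, G C := fun ω hω => by
    obtain ⟨C, hC⟩ := Stabilizes.exists_linearCombination_occupation_le hd hω
      (uniformOn_nonneg S) (linearCombination_one_uniformOn hS)
    exact Set.mem_iUnion.2 ⟨⌈C⌉₊, fun k => (hC k).trans (by gcongr; exact Nat.le_ceil C)⟩
  have hmono : Monotone G := fun C C' h ω hω k => (hω k).trans (by gcongr)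
  have hG : ∀ C : ℕ, G C ⊆
      {ω | linearCombination ℝ (fun x => s x ω) (W (C + 1)) ≤ 2 * ((C + 1 : ℕ) : ℝ)} :=
    fun C ω hω => by
      have := hω (C + 1)
      simp only [Set.mem_ofPred_eq]
      push_cast at this ⊢
      linarith
  calc P {ω | Stabilizes d fun x => s x ω} ≤ P (⋃ C, G C) := measure_mono hstab
    _ = ⨆ C, P (G C) := hmono.measure_iUnion
    _ ≤ _ := iSup_le fun C => (measure_mono (hG C)).trans (hlevel (C + 1) C.succ_pos)

end Sandpile

theorem divisible_sandpile_infinite_mean_not_stabilize_general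
    {Ω : Type*} [MeasurableSpace Ω] (P : Measure Ω) [IsProbabilityMeasure P]
    (d : ℕ) (hd : 1 ≤ d)
    (s : (Fin d → ℤ) → Ω → ℝ)
    (hindep : iIndepFun s P)
    (hident : ∀ x, IdentDistrib (s x) (s 0) P P)
    (hneg : ∫⁻ ω, ENNReal.ofReal (max (-(s 0 ω)) 0) ∂P < ⊤)
    (hpos : ∫⁻ ω, ENNReal.ofReal (max (s 0 ω) 0) ∂P = ⊤) :
    P {ω | Stabilizes d (fun x => s x ω)} = 0 := by
  open Sandpile in
  have : Nonempty (Fin d) := ⟨⟨0, hd⟩⟩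
  have hX : AEMeasurable (s 0) P := (hident 0).aemeasurable_snd
  have hbound : ∀ M : ℕ, 4 ≤ ∫ ω, clamp M (s 0 ω) ∂P →
      P {ω | Stabilizes d (fun x => s x ω)} ≤ ∫⁻ ω, ENNReal.ofReal (belowClamp M (s 0 ω)) ∂P := by
    intro M hM
    have hlim : Tendsto (fun N : ℕ => ENNReal.ofReal ((M : ℝ) ^ 2 / N) +
        ∫⁻ ω, ENNReal.ofReal (belowClamp M (s 0 ω)) ∂P) atTop
        (𝓝 (∫⁻ ω, ENNReal.ofReal (belowClamp M (s 0 ω)) ∂P)) := by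
      simpa using (ENNReal.tendsto_ofReal (tendsto_const_div_atTop_nhds_zero_nat _)).add
        tendsto_const_nhds
    refine ge_of_tendsto hlim ((eventually_ge_atTop 1).mono fun N hN => ?_)
    obtain ⟨S, hS⟩ := Infinite.exists_subset_card_eq (Fin d → ℤ) N
    have hSne : S.Nonempty := Finset.card_pos.1 (by omega)
    simpa [hS] using measure_stabilizes_le (by omega) (fun x y hxy => hindep.indepFun hxy)
      hident M.cast_nonneg hM hSne
  exact nonpos_iff_eq_zero.1 <| ge_of_tendsto (tendsto_lintegral_belowClamp hX hneg) <|
    ((tendsto_integral_clamp hX hneg hpos).eventually_ge_atTop 4).mono hbound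

/-- If `(s(x))_{x∈ℤ^d}` are i.i.d. with `E[s(0)⁻] < ∞` and `E[s(0)⁺] = +∞`
(so `E[s(0)] = +∞`), then almost surely `s` does not stabilize. -/
theorem divisible_sandpile_infinite_mean_not_stabilize
    {Ω : Type*} [MeasurableSpace Ω] (P : Measure Ω) [IsProbabilityMeasure P]
    (d : ℕ) (hd : 1 ≤ d)
    (s : (Fin d → ℤ) → Ω → ℝ)
    (hmeas : ∀ x, Measurable (s x))
    (hindep : iIndepFun s P)
    (hident : ∀ x, IdentDistrib (s x) (s 0) P P)
    (hneg : ∫⁻ ω, ENNReal.ofReal (max (-(s 0 ω)) 0) ∂P < ⊤)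
    (hpos : ∫⁻ ω, ENNReal.ofReal (max (s 0 ω) 0) ∂P = ⊤) :
    P {ω | Stabilizes d (fun x => s x ω)} = 0 :=
  divisible_sandpile_infinite_mean_not_stabilize_general P d hd s hindep hident hneg hpos
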